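/- The 1-active policy class Π_1-act is an (H+1, H)-sunflower: the core Π_core = {π_0} ∪ {π_h : h ∈ [H]}, where π_0 is identically 0 and π_h(s) = 1 if and only if s ∈ S_h, together with the petal sets S_π = {s_(1,h) : h ∈ [H]} for every π ∈ Π_1-act, witnesses this. -/
import Mathlib


/-- A partial trajectory from layer `h` to layer `h'` is given by states `σ i ∈ S i` and
actions `α i` for `h ≤ i ≤ h'`; it is consistent with the policy `π` if `π` takes action
`α i` on the state `σ i` for every `h ≤ i ≤ h'`. -/
def Consistent {S : ℕ → Type} {A : Type} (π : ∀ h : ℕ, S h → A)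
    (σ : ∀ i : ℕ, S i) (α : ℕ → A) (h h' : ℕ) : Prop :=
  ∀ i : ℕ, h ≤ i → i ≤ h' → π i (σ i) = α i

/-- `π` is an `Sbar`-petal on the policy set `core` (for horizon `H`): every partial
trajectory from layer `h` to layer `h'` (with `h ≤ h' < H`, `0`-indexed) that is
consistent with `π` is either consistent with some member of `core`, or visits a state of
`Sbar` at some layer `i` with `h < i ≤ h'`.  States are recorded as pairs `⟨i, s⟩` of a
layer and a state of that layer. -/
def IsPetal (H : ℕ) {S : ℕ → Type} {A : Type} (core : Set (∀ h : ℕ, S h → A))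
    (Sbar : Set ((i : ℕ) × S i)) (π : ∀ h : ℕ, S h → A) : Prop :=
  ∀ h h' : ℕ, h ≤ h' → h' < H → ∀ (σ : ∀ i : ℕ, S i) (α : ℕ → A),
    Consistent π σ α h h' →
      (∃ π' ∈ core, Consistent π' σ α h h') ∨ (∃ i : ℕ, h < i ∧ i ≤ h' ∧ ⟨i, σ i⟩ ∈ Sbar)

/-- The policy class `P` is a `(K, D)`-sunflower: there is a core of at most `K` policies
such that every `π ∈ P` is an `S_π`-petal on the core for some set `S_π` of at most `D`
states. -/
def IsSunflower (H : ℕ) {S : ℕ → Type} {A : Type} (K D : ℕ)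
    (P : Set (∀ h : ℕ, S h → A)) : Prop :=
  ∃ core : Set (∀ h : ℕ, S h → A), core.Finite ∧ core.ncard ≤ K ∧
    ∀ π ∈ P, ∃ Sbar : Set ((i : ℕ) × S i), Sbar.Finite ∧ Sbar.ncard ≤ D ∧
      IsPetal H core Sbar π

/-- The `1`-active policy class over the grid state space with `K + 1` states per layer and
binary actions. -/
def oneActiveClass (K : ℕ) : Set (∀ _ : ℕ, Fin (K + 1) → Bool) :=
  {π | ∃ b : ℕ → Bool, π = fun h s => if s = 0 then b h else false}

/-- The core policy set `{π_0} ∪ {π_h : h < H}`. -/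
def coreClass (K H : ℕ) : Set (∀ _ : ℕ, Fin K → Bool) :=
  insert (fun _ _ => false) {π | ∃ h < H, π = fun i _ => decide (i = h)}

section Aux

lemma coreClass_eq (K H : ℕ) :
    coreClass K H = insert (fun _ _ => false)
      ((fun h => fun i (_ : Fin K) => decide (i = h)) '' Set.Iio H) := by
  ext π
  simp [coreClass, Set.mem_image, eq_comm]

lemma sbar_eq (K H : ℕ) :
    {q : (i : ℕ) × Fin (K + 1) | q.1 < H ∧ q.2 = 0} =
      (fun i => (⟨i, 0⟩ : (i : ℕ) × Fin (K + 1))) '' Set.Iio H := by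
  ext ⟨i, s⟩
  constructor
  · rintro ⟨hi, hs⟩
    exact ⟨i, hi, by rw [← hs]⟩
  · rintro ⟨j, hj, h⟩
    cases h
    exact ⟨hj, rfl⟩

lemma sbar_ncard (K H : ℕ) :
    Set.ncard {q : (i : ℕ) × Fin (K + 1) | q.1 < H ∧ q.2 = 0} ≤ H := by
  rw [sbar_eq]
  calc Set.ncard _ ≤ (Set.Iio H).ncard := Set.ncard_image_le (Set.finite_Iio H)
    _ = H := by
        rw [← Nat.card_coe_set_eq, Nat.card_eq_card_toFinset, Set.toFinset_Iio, Nat.card_Iio]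

lemma sbar_finite (K H : ℕ) :
    Set.Finite {q : (i : ℕ) × Fin (K + 1) | q.1 < H ∧ q.2 = 0} := by
  rw [sbar_eq]; exact ((Set.finite_Iio H).image _)

lemma coreClass_finite (K H : ℕ) : (coreClass K H).Finite := by
  rw [coreClass_eq]
  exact (((Set.finite_Iio H).image _).insert _)

lemma coreClass_ncard (K H : ℕ) : (coreClass K H).ncard ≤ H + 1 := by
  rw [coreClass_eq]
  calc Set.ncard _ ≤ _ + 1 := Set.ncard_insert_le _ _
    _ ≤ H + 1 := by
        have : ((fun h => fun i (_ : Fin K) => decide (i = h)) '' Set.Iio H).ncard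
            ≤ (Set.Iio H).ncard := Set.ncard_image_le (Set.finite_Iio H)
        have h2 : (Set.Iio H).ncard = H := by
          rw [← Nat.card_coe_set_eq, Nat.card_eq_card_toFinset, Set.toFinset_Iio, Nat.card_Iio]
        omega

lemma oneActive_petal (K H : ℕ) :
    ∀ π ∈ oneActiveClass K,
      IsPetal (S := fun _ => Fin (K + 1)) H (coreClass (K + 1) H)
        {q : (i : ℕ) × Fin (K + 1) | q.1 < H ∧ q.2 = 0} π := by
  rintro π ⟨b, rfl⟩ h h' hhh' hH σ α hcons
  by_cases hz : ∃ i, h < i ∧ i ≤ h' ∧ σ i = 0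
  · right
    obtain ⟨i, hi1, hi2, hi3⟩ := hz
    exact ⟨i, hi1, hi2, lt_of_le_of_lt hi2 hH, hi3⟩
  · left
    push_neg at hz
    -- for i in (h, h'], σ i ≠ 0 so α i = false
    have hfalse : ∀ i, h < i → i ≤ h' → α i = false := by
      intro i hi1 hi2
      simpa [hz i hi1 hi2] using (hcons i hi1.le hi2).symm
    by_cases hah : α h = false
    · refine ⟨fun _ _ => false, Set.mem_insert _ _, ?_⟩
      intro i hi1 hi2
      rcases eq_or_lt_of_le hi1 with rfl | hlt
      · exact hah.symm
      · exact (hfalse i hlt hi2).symm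
    · refine ⟨fun i _ => decide (i = h), Set.mem_insert_of_mem _
        ⟨h, lt_of_le_of_lt hhh' hH, rfl⟩, ?_⟩
      intro i hi1 hi2
      rcases eq_or_lt_of_le hi1 with rfl | hlt
      · simp [Bool.not_eq_false] at hah ⊢
        exact hah
      · simp [Nat.ne_of_gt hlt, hfalse i hlt hi2]

end Aux

theorem oneActive_sunflower (K H : ℕ) (hH : 1 ≤ H) :
    (coreClass (K + 1) H).ncard ≤ H + 1 ∧
      Set.ncard {q : (i : ℕ) × Fin (K + 1) | q.1 < H ∧ q.2 = 0} ≤ H ∧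
      (∀ π ∈ oneActiveClass K,
        IsPetal (S := fun _ => Fin (K + 1)) H (coreClass (K + 1) H)
          {q : (i : ℕ) × Fin (K + 1) | q.1 < H ∧ q.2 = 0} π) ∧
      IsSunflower (S := fun _ => Fin (K + 1)) H (H + 1) H (oneActiveClass K) := by
  refine ⟨coreClass_ncard _ _, sbar_ncard _ _, oneActive_petal K H, ?_⟩
  exact ⟨coreClass (K + 1) H, coreClass_finite _ _, coreClass_ncard _ _,
    fun π hπ => ⟨_, sbar_finite K H, sbar_ncard K H, oneActive_petal K H π hπ⟩⟩
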